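/- Let n ≥ 2 and 1 ≤ r < n be integers and let ν₁, ν₂, η₁, η₂ be words such that ν₁ and ν₂ are incomparable, η₁ and η₂ are incomparable, U_{ν₁} ∪ U_{ν₂} ≠ 𝔠_{n,r}, and U_{η₁} ∪ U_{η₂} ≠ 𝔠_{n,r}. Then there exists g ∈ G_{n,r} such that g(ν₁⌢x) = η₁⌢x and g(ν₂⌢x) = η₂⌢x for all x ∈ 𝔠_n. -/

import Mathlib

open Set

namespace HigmanAut

/-- The one-sided infinite sequence space `𝔠_n` on `n` letters. -/
abbrev Cn (n : ℕ) : Type := ℕ → Fin n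

/-- The Cantor space `𝔠_{n,r} = Fin r × (ℕ → Fin n)` (with the product topology,
`Fin r` and `Fin n` discrete). -/
abbrev CNR (n r : ℕ) : Type := Fin r × Cn n

/-- A word: a letter from `Fin r` together with a finite list over `Fin n`. -/
abbrev Word (n r : ℕ) : Type := Fin r × List (Fin n)

/-- Self-homeomorphisms of `𝔠_{n,r}`. -/
abbrev Homeo (n r : ℕ) : Type := CNR n r ≃ₜ CNR n r

/-- Append a finite list to a word: `ν⌢w`. -/
def wApp {n r : ℕ} (ν : Word n r) (w : List (Fin n)) : Word n r := (ν.1, ν.2 ++ w)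

/-- The point `ν⌢x` of `𝔠_{n,r}` determined by a word `ν` followed by `x ∈ 𝔠_n`. -/
def wCat {n r : ℕ} (ν : Word n r) (x : Cn n) : CNR n r :=
  (ν.1, fun i => if h : i < ν.2.length then ν.2.get ⟨i, h⟩ else x (i - ν.2.length))

/-- The cone `U_ν` of a word `ν`. -/
def cone {n r : ℕ} (ν : Word n r) : Set (CNR n r) :=
  {p | p.1 = ν.1 ∧ ∀ (i : ℕ) (h : i < ν.2.length), p.2 i = ν.2.get ⟨i, h⟩}

/-- Membership in the Higman--Thompson group `G_{n,r}`: `g` is a prefix code map,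
i.e. there are `k ≥ 1` and words `ν i`, `η i` whose cones partition `𝔠_{n,r}`
with `g(ν i ⌢ x) = η i ⌢ x` for all `i`, `x`. -/
def IsHigman {n r : ℕ} (g : Homeo n r) : Prop :=
  ∃ k : ℕ, 0 < k ∧ ∃ ν η : Fin k → Word n r,
    (∀ p : CNR n r, ∃! i : Fin k, p ∈ cone (ν i)) ∧
    (∀ p : CNR n r, ∃! i : Fin k, p ∈ cone (η i)) ∧
    (∀ (i : Fin k) (x : Cn n), g (wCat (ν i) x) = wCat (η i) x)

/-- The Higman--Thompson group `G_{n,r}` as a set of homeomorphisms. -/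
def higmanSet (n r : ℕ) : Set (Homeo n r) := {g | IsHigman g}

/-- Conjugation: in the paper's right-action notation this is `g ↦ h⁻¹ g h`
(as a left function, `x ↦ h (g (h⁻¹ x))`). -/
def conjH {n r : ℕ} (h g : Homeo n r) : Homeo n r := (h.symm.trans g).trans h

/-- `h` acts in the same fashion on `U_α` and `U_β`: there are words `α'`, `β'`
and a common local action `f` with `h(α⌢x) = α'⌢f(x)` and `h(β⌢x) = β'⌢f(x)`. -/
def SameFashion {n r : ℕ} (h : Homeo n r) (α β : Word n r) : Prop :=
  ∃ (α' β' : Word n r) (f : Cn n → Cn n),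
    (∀ x : Cn n, h (wCat α x) = wCat α' (f x)) ∧
    (∀ x : Cn n, h (wCat β x) = wCat β' (f x))

/-- Tail equivalence on `𝔠_{n,r}`. -/
def TailEq {n r : ℕ} (x y : CNR n r) : Prop :=
  ∃ (ν η : Word n r) (z : Cn n), x = wCat ν z ∧ y = wCat η z

/-- `h` is pointwise canonical. -/
def PtwiseCanonical {n r : ℕ} (h : Homeo n r) : Prop :=
  ∀ x : CNR n r, ∃ (η₁ η₂ : Word n r) (y : Cn n), x = wCat η₁ y ∧ h x = wCat η₂ y

/-- `h` is densely canonical. -/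
def DenselyCanonical {n r : ℕ} (h : Homeo n r) : Prop :=
  ∀ U : Set (CNR n r), IsOpen U → U.Nonempty →
    ∃ η ζ : Word n r, cone η ⊆ U ∧ ∀ x : Cn n, h (wCat η x) = wCat ζ x

/-- `h` belongs to `H_{n,r,∼}`: `x ∼ y` iff `h(x) ∼ h(y)`. -/
def PreservesTailEq {n r : ℕ} (h : Homeo n r) : Prop :=
  ∀ x y : CNR n r, TailEq x y ↔ TailEq (h x) (h y)

/-- `ν` is a prefix of `η`, i.e. `U_η ⊆ U_ν`. -/
def WPrefix {n r : ℕ} (ν η : Word n r) : Prop := cone η ⊆ cone ν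

/-- Two words are incomparable if neither is a prefix of the other. -/
def Incomp {n r : ℕ} (ν η : Word n r) : Prop := ¬ WPrefix ν η ∧ ¬ WPrefix η ν

/-!
Take `L` at least the lengths of the four words. The level-`L` words extending neither `ν₁` nor
`ν₂` cut the complement of `U_{ν₁} ∪ U_{ν₂}` into `r nᴸ - n^(L - |ν₁|) - n^(L - |ν₂|)` cones, and
likewise for `η₁, η₂`; since `nᵏ ≡ 1 [MOD n - 1]`, the two counts agree modulo `n - 1`. Replacing a
cone by its `n` children adds `n - 1` cones, so both complements can be cut into the same number of
cones. Matching these in any order, together with `ν₁ ↦ η₁` and `ν₂ ↦ η₂`, gives two cone partitions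
of `𝔠_{n,r}` indexed by the same finite type, and the prefix replacement between them is the
required element of `G_{n,r}`.
-/

section

variable {n r : ℕ}

def initSeg (m : ℕ) (x : Cn n) : List (Fin n) := (List.range m).map x

def tailFrom (m : ℕ) (p : CNR n r) : Cn n := fun i => p.2 (i + m)

@[simp]
lemma length_initSeg (m : ℕ) (x : Cn n) : (initSeg m x).length = m := by
  simp [initSeg]

lemma initSeg_succ (m : ℕ) (x : Cn n) : initSeg (m + 1) x = initSeg m x ++ [x m] := by
  simp [initSeg, List.range_succ]

lemma initSeg_prefix {k m : ℕ} (h : k ≤ m) (x : Cn n) : initSeg k x <+: initSeg m x := by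
  have : initSeg k x = (initSeg m x).take k := by
    simp [initSeg, ← List.map_take, List.take_range, h]
  exact this ▸ List.take_prefix _ _

lemma mem_cone_iff {ν : Word n r} {p : CNR n r} :
    p ∈ cone ν ↔ p.1 = ν.1 ∧ initSeg ν.2.length p.2 = ν.2 := by
  simp [cone, initSeg, List.ext_getElem_iff]

lemma wCat_snd_of_lt (ν : Word n r) (x : Cn n) {i : ℕ} (h : i < ν.2.length) :
    (wCat ν x).2 i = ν.2[i] := by
  simp [wCat, h]

lemma wCat_snd_add_length (ν : Word n r) (x : Cn n) (m : ℕ) :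
    (wCat ν x).2 (m + ν.2.length) = x m := by
  simp [wCat]

@[simp]
lemma tailFrom_wCat (ν : Word n r) (x : Cn n) : tailFrom ν.2.length (wCat ν x) = x :=
  funext (wCat_snd_add_length ν x)

lemma wCat_mem_cone (ν : Word n r) (x : Cn n) : wCat ν x ∈ cone ν :=
  ⟨rfl, fun _ h => wCat_snd_of_lt ν x h⟩

lemma wCat_tailFrom {ν : Word n r} {p : CNR n r} (h : p ∈ cone ν) :
    wCat ν (tailFrom ν.2.length p) = p := by
  refine Prod.ext h.1.symm (funext fun j => ?_)
  by_cases hj : j < ν.2.length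
  · rw [wCat_snd_of_lt ν _ hj]
    exact (h.2 j hj).symm
  · obtain ⟨m, rfl⟩ : ∃ m, j = m + ν.2.length := ⟨j - ν.2.length, by omega⟩
    rw [wCat_snd_add_length]
    rfl

lemma cone_nonempty (hn : 0 < n) (ν : Word n r) : (cone ν).Nonempty :=
  ⟨wCat ν fun _ => ⟨0, hn⟩, wCat_mem_cone _ _⟩

lemma continuous_wCat (ν : Word n r) : Continuous (wCat ν) := by
  refine continuous_prodMk.mpr ⟨continuous_const, continuous_pi fun j => ?_⟩
  by_cases hj : j < ν.2.length
  · simpa only [wCat, hj, dif_pos] using continuous_const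
  · simpa only [wCat, hj, dif_neg, not_false_iff] using continuous_apply _

lemma continuous_tailFrom (m : ℕ) : Continuous (tailFrom m : CNR n r → Cn n) :=
  continuous_pi fun i => (continuous_apply (i + m)).comp continuous_snd

lemma isOpen_cone (ν : Word n r) : IsOpen (cone ν) := by
  have : cone ν = Prod.fst ⁻¹' {ν.1} ∩
      ⋂ i : Fin ν.2.length, (fun p : CNR n r => p.2 i) ⁻¹' {ν.2.get i} := by
    ext p
    simp [cone, Fin.forall_iff]
  rw [this]
  refine (continuous_fst.isOpen_preimage _ (isOpen_discrete _)).inter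
    (isOpen_iInter_of_finite fun i => ?_)
  exact ((continuous_apply (i : ℕ)).comp continuous_snd).isOpen_preimage _ (isOpen_discrete _)

lemma cone_subset_cone {ν η : Word n r} (h₁ : η.1 = ν.1) (h₂ : ν.2 <+: η.2) :
    cone η ⊆ cone ν := fun p hp =>
  ⟨hp.1.trans h₁, fun i h => by
    simpa [← h₂.getElem h] using hp.2 i (h.trans_le h₂.length_le)⟩

lemma prefix_of_mem_cone {ν η : Word n r} {p : CNR n r} (hν : p ∈ cone ν) (hη : p ∈ cone η)
    (hl : ν.2.length ≤ η.2.length) : η.1 = ν.1 ∧ ν.2 <+: η.2 := by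
  rw [mem_cone_iff] at hν hη
  exact ⟨hη.1.symm.trans hν.1, hν.2 ▸ hη.2 ▸ initSeg_prefix hl p.2⟩

lemma wPrefix_iff_of_length_le (hn : 0 < n) {ν η : Word n r}
    (hl : ν.2.length ≤ η.2.length) : WPrefix ν η ↔ η.1 = ν.1 ∧ ν.2 <+: η.2 := by
  refine ⟨fun h => ?_, fun h => cone_subset_cone h.1 h.2⟩
  obtain ⟨p, hp⟩ := cone_nonempty hn η
  exact prefix_of_mem_cone (h hp) hp hl

lemma wPrefix_of_mem_cone {ν η : Word n r} {p : CNR n r} (hν : p ∈ cone ν) (hη : p ∈ cone η)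
    (hl : ν.2.length ≤ η.2.length) : WPrefix ν η :=
  let ⟨h₁, h₂⟩ := prefix_of_mem_cone hν hη hl
  cone_subset_cone h₁ h₂

lemma Incomp.disjoint_cone {ν η : Word n r} (h : Incomp ν η) : Disjoint (cone ν) (cone η) := by
  refine Set.disjoint_left.mpr fun p hν hη => ?_
  rcases le_total ν.2.length η.2.length with hl | hl
  · exact h.1 (wPrefix_of_mem_cone hν hη hl)
  · exact h.2 (wPrefix_of_mem_cone hη hν hl)

structure IsConePartition {ι : Type*} (ν : ι → Word n r) (A : Set (CNR n r)) : Prop where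
  cone_subset : ∀ i, cone (ν i) ⊆ A
  exists_mem_cone : ∀ p ∈ A, ∃ i, p ∈ cone (ν i)
  pairwise_disjoint : Pairwise fun i j => Disjoint (cone (ν i)) (cone (ν j))

namespace IsConePartition

variable {ι κ : Type*} {ν : ι → Word n r} {A B : Set (CNR n r)}

lemma eq_of_mem_cone (h : IsConePartition ν A) {p : CNR n r} {i j : ι}
    (hi : p ∈ cone (ν i)) (hj : p ∈ cone (ν j)) : i = j := by
  by_contra hij
  exact Set.disjoint_left.mp (h.pairwise_disjoint hij) hi hj

lemma existsUnique_mem_cone (h : IsConePartition ν univ) (p : CNR n r) :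
    ∃! i, p ∈ cone (ν i) := by
  obtain ⟨i, hi⟩ := h.exists_mem_cone p (mem_univ p)
  exact ⟨i, hi, fun j hj => h.eq_of_mem_cone hj hi⟩

lemma comp_equiv (h : IsConePartition ν A) (e : κ ≃ ι) : IsConePartition (ν ∘ e) A where
  cone_subset i := h.cone_subset (e i)
  exists_mem_cone p hp := by
    obtain ⟨i, hi⟩ := h.exists_mem_cone p hp
    exact ⟨e.symm i, by simpa using hi⟩
  pairwise_disjoint i j hij := h.pairwise_disjoint (e.injective.ne hij)

lemma exists_fin [Fintype ι] (h : IsConePartition ν A) {k : ℕ} (hk : Fintype.card ι = k) :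
    ∃ ν' : Fin k → Word n r, IsConePartition ν' A :=
  ⟨_, h.comp_equiv (Fintype.equivFinOfCardEq hk).symm⟩

lemma sum_elim {η : κ → Word n r} (hν : IsConePartition ν A) (hη : IsConePartition η B)
    (hAB : Disjoint A B) : IsConePartition (Sum.elim ν η) (A ∪ B) where
  cone_subset
    | .inl i => (hν.cone_subset i).trans subset_union_left
    | .inr j => (hη.cone_subset j).trans subset_union_right
  exists_mem_cone p hp := by
    rcases hp with hp | hp
    · obtain ⟨i, hi⟩ := hν.exists_mem_cone p hp
      exact ⟨.inl i, hi⟩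
    · obtain ⟨j, hj⟩ := hη.exists_mem_cone p hp
      exact ⟨.inr j, hj⟩
  pairwise_disjoint
    | .inl i, .inl i', h => hν.pairwise_disjoint fun e => h (congrArg _ e)
    | .inl i, .inr j, _ => hAB.mono (hν.cone_subset i) (hη.cone_subset j)
    | .inr j, .inl i, _ => hAB.symm.mono (hη.cone_subset j) (hν.cone_subset i)
    | .inr j, .inr j', h => hη.pairwise_disjoint fun e => h (congrArg _ e)

lemma union_compl {η : κ → Word n r} (hν : IsConePartition ν A) (hη : IsConePartition η Aᶜ) :
    IsConePartition (Sum.elim ν η) univ :=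
  union_compl_self A ▸ hν.sum_elim hη disjoint_compl_right

lemma subtype_ne (h : IsConePartition ν A) (i₀ : ι) :
    IsConePartition (fun i : {i // i ≠ i₀} => ν i) (A \ cone (ν i₀)) where
  cone_subset i := subset_sdiff.mpr ⟨h.cone_subset i, h.pairwise_disjoint i.2⟩
  exists_mem_cone p hp := by
    obtain ⟨i, hi⟩ := h.exists_mem_cone p hp.1
    exact ⟨⟨i, by rintro rfl; exact hp.2 hi⟩, hi⟩
  pairwise_disjoint i j hij := h.pairwise_disjoint (Subtype.coe_injective.ne hij)

lemma subtype_disjoint (h : IsConePartition ν univ)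
    (hB : ∀ i, ¬ Disjoint (cone (ν i)) B → cone (ν i) ⊆ B) :
    IsConePartition (fun i : {i // Disjoint (cone (ν i)) B} => ν i) Bᶜ where
  cone_subset i := subset_compl_iff_disjoint_right.mpr i.2
  exists_mem_cone p hp := by
    obtain ⟨i, hi⟩ := h.exists_mem_cone p (mem_univ p)
    exact ⟨⟨i, by_contra fun hd => hp (hB i hd hi)⟩, hi⟩
  pairwise_disjoint i j hij := h.pairwise_disjoint (Subtype.coe_injective.ne hij)

end IsConePartition

lemma isConePartition_single (ν : Word n r) : IsConePartition (fun _ : Unit => ν) (cone ν) where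
  cone_subset _ := subset_rfl
  exists_mem_cone _ hp := ⟨(), hp⟩
  pairwise_disjoint i j h := (h (Subsingleton.elim i j)).elim

lemma snd_eq_of_mem_cone_wApp {ν : Word n r} {a : Fin n} {p : CNR n r}
    (h : p ∈ cone (wApp ν [a])) : p.2 ν.2.length = a := by
  obtain ⟨-, ha⟩ : initSeg ν.2.length p.2 = ν.2 ∧ p.2 ν.2.length = a := by
    simpa [wApp, initSeg_succ] using (mem_cone_iff.mp h).2
  exact ha

lemma isConePartition_children (ν : Word n r) :
    IsConePartition (fun a : Fin n => wApp ν [a]) (cone ν) where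
  cone_subset a := cone_subset_cone rfl (List.prefix_append _ _)
  exists_mem_cone p hp := by
    refine ⟨p.2 ν.2.length, mem_cone_iff.mpr ⟨hp.1, ?_⟩⟩
    simp only [wApp, List.length_append, List.length_singleton, initSeg_succ,
      (mem_cone_iff.mp hp).2]
  pairwise_disjoint a b hab := Set.disjoint_left.mpr fun p ha hb =>
    hab ((snd_eq_of_mem_cone_wApp ha).symm.trans (snd_eq_of_mem_cone_wApp hb))

namespace IsConePartition

variable {A : Set (CNR n r)} {N : ℕ} {ν : Fin N → Word n r}

lemma exists_fin_add (hn : 0 < n) (h : IsConePartition ν A) (i₀ : Fin N) :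
    ∃ ν' : Fin (N + (n - 1)) → Word n r, IsConePartition ν' A := by
  have hsplit : A \ cone (ν i₀) ∪ cone (ν i₀) = A := sdiff_union_of_subset (h.cone_subset i₀)
  refine (hsplit ▸ (h.subtype_ne i₀).sum_elim (isConePartition_children (ν i₀))
    disjoint_sdiff_left).exists_fin ?_
  have hN := i₀.pos
  simp only [ne_eq, Fintype.card_sum, Fintype.card_subtype_compl, Fintype.card_fin,
    Fintype.card_unique]
  omega

lemma exists_fin_add_mul (hn : 0 < n) (h : IsConePartition ν A) (hN : 0 < N) (m : ℕ) :
    ∃ ν' : Fin (N + m * (n - 1)) → Word n r, IsConePartition ν' A := by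
  induction m with
  | zero => exact h.exists_fin (by simp)
  | succ m ih =>
    obtain ⟨ν', h'⟩ := ih
    obtain ⟨ν'', h''⟩ := h'.exists_fin_add hn ⟨0, by omega⟩
    exact h''.exists_fin (by simp only [Fintype.card_fin]; ring)

lemma exists_fin_of_modEq (h : IsConePartition ν A) (hA : A.Nonempty) {M : ℕ} (hM : N ≤ M)
    (hmod : M ≡ N [MOD n - 1]) : ∃ ν' : Fin M → Word n r, IsConePartition ν' A := by
  obtain ⟨p, hp⟩ := hA
  obtain ⟨i, -⟩ := h.exists_mem_cone p hp
  obtain ⟨m, hm⟩ := (Nat.modEq_iff_dvd' hM).mp hmod.symm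
  obtain ⟨ν', h'⟩ := h.exists_fin_add_mul (p.2 0).pos i.pos m
  exact h'.exists_fin (by rw [Fintype.card_fin, mul_comm, ← hm]; omega)

end IsConePartition

lemma wPrefix_of_not_disjoint {ν η : Word n r} (h : ¬ Disjoint (cone η) (cone ν))
    (hl : ν.2.length ≤ η.2.length) : WPrefix ν η := by
  obtain ⟨p, hη, hν⟩ := Set.not_disjoint_iff.mp h
  exact wPrefix_of_mem_cone hν hη hl

def levelWord {L : ℕ} (ω : Fin r × List.Vector (Fin n) L) : Word n r := (ω.1, ω.2.toList)

@[simp]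
lemma length_levelWord {L : ℕ} (ω : Fin r × List.Vector (Fin n) L) :
    (levelWord ω).2.length = L :=
  ω.2.toList_length

lemma isConePartition_levelWord (L : ℕ) :
    IsConePartition (levelWord : Fin r × List.Vector (Fin n) L → Word n r) univ where
  cone_subset _ := subset_univ _
  exists_mem_cone p _ :=
    ⟨(p.1, ⟨initSeg L p.2, length_initSeg L p.2⟩), mem_cone_iff.mpr ⟨rfl, by simp [levelWord]⟩⟩
  pairwise_disjoint ω ω' hne := Set.disjoint_left.mpr fun p h h' => hne <| by
    obtain ⟨h₁, h₂⟩ := prefix_of_mem_cone h h' (by simp)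
    exact Prod.ext h₁.symm (List.Vector.toList_injective (h₂.eq_of_length (by simp [levelWord])))

open scoped Classical in
lemma card_wPrefix_levelWord (hn : 0 < n) {ν : Word n r} {L : ℕ} (hL : ν.2.length ≤ L) :
    Fintype.card {ω : Fin r × List.Vector (Fin n) L // WPrefix ν (levelWord ω)} =
      n ^ (L - ν.2.length) := by
  have hiff (ω : Fin r × List.Vector (Fin n) L) :
      WPrefix ν (levelWord ω) ↔ ω.1 = ν.1 ∧ ν.2 <+: ω.2.toList :=
    wPrefix_iff_of_length_le hn (by simpa using hL)
  rw [Fintype.card_congr (Equiv.subtypeEquivRight hiff)]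
  let drop (ω : {ω : Fin r × List.Vector (Fin n) L // ω.1 = ν.1 ∧ ν.2 <+: ω.2.toList}) :
      List.Vector (Fin n) (L - ν.2.length) := ⟨ω.1.2.toList.drop ν.2.length, by simp⟩
  have hdrop : Function.Bijective drop := by
    refine ⟨fun ω ω' h => ?_, fun w => ?_⟩
    · have hω := List.prefix_iff_eq_append.mp ω.2.2
      have hω' := List.prefix_iff_eq_append.mp ω'.2.2
      have h' : ω.1.2.toList.drop ν.2.length = ω'.1.2.toList.drop ν.2.length :=
        congrArg List.Vector.toList h
      exact Subtype.ext (Prod.ext (ω.2.1.trans ω'.2.1.symm)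
        (List.Vector.toList_injective (by rw [← hω, ← hω', h'])))
    · refine ⟨⟨(ν.1, ⟨ν.2 ++ w.toList, by simp; omega⟩), rfl, List.prefix_append _ _⟩, ?_⟩
      exact List.Vector.toList_injective (List.drop_left ..)
  simp [Fintype.card_congr (Equiv.ofBijective drop hdrop), card_vector]

open scoped Classical in
lemma card_disjoint_levelWord_add (hn : 0 < n) {ν₁ ν₂ : Word n r}
    (hd : Disjoint (cone ν₁) (cone ν₂)) {L : ℕ} (h₁ : ν₁.2.length ≤ L) (h₂ : ν₂.2.length ≤ L) :
    Fintype.card {ω : Fin r × List.Vector (Fin n) L //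
        Disjoint (cone (levelWord ω)) (cone ν₁ ∪ cone ν₂)} +
      n ^ (L - ν₁.2.length) + n ^ (L - ν₂.2.length) = r * n ^ L := by
  have hiff (ω : Fin r × List.Vector (Fin n) L) :
      ¬ Disjoint (cone (levelWord ω)) (cone ν₁ ∪ cone ν₂) ↔
        WPrefix ν₁ (levelWord ω) ∨ WPrefix ν₂ (levelWord ω) := by
    rw [Set.disjoint_union_right, not_and_or]
    refine or_congr ⟨fun h => wPrefix_of_not_disjoint h (by simpa using h₁), fun h hd' => ?_⟩
      ⟨fun h => wPrefix_of_not_disjoint h (by simpa using h₂), fun h hd' => ?_⟩ <;>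
    · obtain ⟨p, hp⟩ := cone_nonempty hn (levelWord ω)
      exact Set.disjoint_left.mp hd' hp (h hp)
  have hexcl : Disjoint (fun ω : Fin r × List.Vector (Fin n) L => WPrefix ν₁ (levelWord ω))
      (fun ω => WPrefix ν₂ (levelWord ω)) :=
    le_compl_iff_disjoint_right.mp fun ω hω₁ hω₂ => by
      obtain ⟨p, hp⟩ := cone_nonempty hn (levelWord ω)
      exact Set.disjoint_left.mp hd (hω₁ hp) (hω₂ hp)
  have hmeet : Fintype.card {ω : Fin r × List.Vector (Fin n) L //
      ¬ Disjoint (cone (levelWord ω)) (cone ν₁ ∪ cone ν₂)} =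
        n ^ (L - ν₁.2.length) + n ^ (L - ν₂.2.length) := by
    rw [Fintype.card_congr (Equiv.subtypeEquivRight hiff),
      Fintype.card_subtype_or_disjoint _ _ hexcl,
      card_wPrefix_levelWord hn h₁, card_wPrefix_levelWord hn h₂]
  rw [add_assoc, ← hmeet, ← Fintype.card_sum, Fintype.card_congr (Equiv.sumCompl _)]
  simp [card_vector]

lemma exists_isConePartition_compl (hn : 0 < n) {ν₁ ν₂ : Word n r}
    (hd : Disjoint (cone ν₁) (cone ν₂)) {L : ℕ} (h₁ : ν₁.2.length ≤ L) (h₂ : ν₂.2.length ≤ L) :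
    ∃ (N : ℕ) (ν : Fin N → Word n r), IsConePartition ν (cone ν₁ ∪ cone ν₂)ᶜ ∧
      N + n ^ (L - ν₁.2.length) + n ^ (L - ν₂.2.length) = r * n ^ L := by
  classical
  have hpart := (isConePartition_levelWord L).subtype_disjoint (B := cone ν₁ ∪ cone ν₂)
    fun ω hω => by
      rw [Set.disjoint_union_right, not_and_or] at hω
      rcases hω with hω | hω
      · exact (wPrefix_of_not_disjoint hω (by simpa using h₁)).trans subset_union_left
      · exact (wPrefix_of_not_disjoint hω (by simpa using h₂)).trans subset_union_right
  obtain ⟨ν, hν⟩ := hpart.exists_fin rfl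
  exact ⟨_, ν, hν, card_disjoint_levelWord_add hn hd h₁ h₂⟩

lemma exists_continuous_of_isConePartition {ι : Type*} {ν : ι → Word n r}
    (hν : IsConePartition ν univ) (η : ι → Word n r) :
    ∃ F : CNR n r → CNR n r, Continuous F ∧ ∀ i x, F (wCat (ν i) x) = wCat (η i) x := by
  choose I hI using fun p => hν.exists_mem_cone p (mem_univ p)
  refine ⟨fun p => wCat (η (I p)) (tailFrom (ν (I p)).2.length p), ?_, fun i x => ?_⟩
  · refine continuous_iff_continuousAt.mpr fun p => ?_
    refine ((continuous_wCat (η (I p))).comp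
      (continuous_tailFrom (ν (I p)).2.length)).continuousAt.congr ?_
    filter_upwards [(isOpen_cone (ν (I p))).mem_nhds (hI p)] with q hq
    rw [hν.eq_of_mem_cone (hI q) hq]
    rfl
  · dsimp only
    rw [hν.eq_of_mem_cone (hI _) (wCat_mem_cone (ν i) x), tailFrom_wCat]

lemma exists_homeo_of_isConePartition {ι : Type*} {ν η : ι → Word n r}
    (hν : IsConePartition ν univ) (hη : IsConePartition η univ) :
    ∃ g : Homeo n r, ∀ i x, g (wCat (ν i) x) = wCat (η i) x := by
  obtain ⟨F, hFc, hF⟩ := exists_continuous_of_isConePartition hν η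
  obtain ⟨G, hGc, hG⟩ := exists_continuous_of_isConePartition hη ν
  have hGF (p : CNR n r) : G (F p) = p := by
    obtain ⟨i, hi⟩ := hν.exists_mem_cone p (mem_univ p)
    rw [← wCat_tailFrom hi, hF, hG]
  have hFG (p : CNR n r) : F (G p) = p := by
    obtain ⟨i, hi⟩ := hη.exists_mem_cone p (mem_univ p)
    rw [← wCat_tailFrom hi, hG, hF]
  exact ⟨⟨⟨F, G, hGF, hFG⟩, hFc, hGc⟩, hF⟩

lemma exists_isHigman_of_isConePartition {ι : Type*} [Fintype ι] [Nonempty ι]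
    {ν η : ι → Word n r} (hν : IsConePartition ν univ) (hη : IsConePartition η univ) :
    ∃ g : Homeo n r, IsHigman g ∧ ∀ i x, g (wCat (ν i) x) = wCat (η i) x := by
  obtain ⟨g, hg⟩ := exists_homeo_of_isConePartition hν hη
  let e := (Fintype.equivFin ι).symm
  exact ⟨g, ⟨_, Fintype.card_pos, ν ∘ e, η ∘ e, (hν.comp_equiv e).existsUnique_mem_cone,
    (hη.comp_equiv e).existsUnique_mem_cone, fun i => hg (e i)⟩, hg⟩

lemma modEq_of_add_pow_add_pow_eq (hn : 0 < n) {a b i j k l : ℕ}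
    (h : a + n ^ i + n ^ j = b + n ^ k + n ^ l) :
    a ≡ b [MOD n - 1] := by
  have hpow (m : ℕ) : n ^ m ≡ 1 [MOD n - 1] := by
    simpa using (Nat.modEq_sub hn).pow m
  refine Nat.ModEq.add_right_cancel' 2 ?_
  calc a + 2 ≡ a + n ^ i + n ^ j [MOD n - 1] := by
        rw [add_assoc]; exact ((hpow i).add (hpow j)).symm.add_left a
    _ = b + n ^ k + n ^ l := h
    _ ≡ b + 2 [MOD n - 1] := by
        rw [add_assoc]; exact ((hpow k).add (hpow l)).add_left b

end

theorem exists_higman_on_two_cones_general (n r : ℕ) (hn : 2 ≤ n) (ν₁ ν₂ η₁ η₂ : Word n r)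
    (hν : Incomp ν₁ ν₂) (hη : Incomp η₁ η₂)
    (hνU : cone ν₁ ∪ cone ν₂ ≠ Set.univ) (hηU : cone η₁ ∪ cone η₂ ≠ Set.univ) :
    ∃ g : Homeo n r, IsHigman g ∧
      ∀ x : Cn n, g (wCat ν₁ x) = wCat η₁ x ∧ g (wCat ν₂ x) = wCat η₂ x := by
  set L := ν₁.2.length + ν₂.2.length + η₁.2.length + η₂.2.length
  obtain ⟨Nν, fν, hfν, hNν⟩ :=
    exists_isConePartition_compl (by omega) hν.disjoint_cone (L := L) (by omega) (by omega)
  obtain ⟨Nη, fη, hfη, hNη⟩ :=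
    exists_isConePartition_compl (by omega) hη.disjoint_cone (L := L) (by omega) (by omega)
  -- Cutting a cone into its `n` children adds `n - 1` cones, so both complements can be cut
  -- into `M` cones.
  set M := Nν + Nη * (n - 1)
  have hMν : M ≡ Nν [MOD n - 1] := Nat.add_mul_mod_self_right Nν Nη (n - 1)
  have hMη : M ≡ Nη [MOD n - 1] :=
    hMν.trans (modEq_of_add_pow_add_pow_eq (by omega) (hNν.trans hNη.symm))
  have hNηM : Nη ≤ M := (Nat.le_mul_of_pos_right Nη (by omega)).trans (Nat.le_add_left _ _)
  obtain ⟨gν, hgν⟩ := hfν.exists_fin_of_modEq (nonempty_compl.mpr hνU) (Nat.le_add_right _ _) hMν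
  obtain ⟨gη, hgη⟩ := hfη.exists_fin_of_modEq (nonempty_compl.mpr hηU) hNηM hMη
  have hpairν := (isConePartition_single ν₁).sum_elim (isConePartition_single ν₂) hν.disjoint_cone
  have hpairη := (isConePartition_single η₁).sum_elim (isConePartition_single η₂) hη.disjoint_cone
  obtain ⟨g, hg, hgw⟩ :=
    exists_isHigman_of_isConePartition (hpairν.union_compl hgν) (hpairη.union_compl hgη)
  exact ⟨g, hg, fun x => ⟨hgw (.inl (.inl ())) x, hgw (.inl (.inr ())) x⟩⟩

/-- Given incomparable pairs `ν₁ ⊥ ν₂` and `η₁ ⊥ η₂` whose cone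
unions are proper, there is `g ∈ G_{n,r}` acting as the basic cone maps
`g_{ν₁,η₁}` and `g_{ν₂,η₂}`. -/
theorem exists_higman_on_two_cones (n r : ℕ) (hn : 2 ≤ n) (hr1 : 1 ≤ r)
    (hrn : r < n) (ν₁ ν₂ η₁ η₂ : Word n r)
    (hν : Incomp ν₁ ν₂) (hη : Incomp η₁ η₂)
    (hνU : cone ν₁ ∪ cone ν₂ ≠ Set.univ) (hηU : cone η₁ ∪ cone η₂ ≠ Set.univ) :
    ∃ g : Homeo n r, IsHigman g ∧
      ∀ x : Cn n, g (wCat ν₁ x) = wCat η₁ x ∧ g (wCat ν₂ x) = wCat η₂ x :=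
  exists_higman_on_two_cones_general n r hn ν₁ ν₂ η₁ η₂ hν hη hνU hηU

end HigmanAut
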